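/- arXiv:1103.0375 — 5 statements merged into one kernel-verified Lean document; each statement's English description precedes it below -/
import Mathlib

section
/- Under the multispecies coalescent on a binary species tree σ whose internal edge lengths all exceed ε ≥ 0, if a set of gene lineages C_g has clade probability P_σ(C_g) ≥ (1/3)exp(-ε), then the corresponding taxon set C is a clade on the species tree σ. -/
/-- Rooted binary trees with leaves labelled by `α`. -/
inductive RTree (α : Type) where
  | leaf : α → RTree α
  | node : RTree α → RTree α → RTree α

variable {α : Type} [DecidableEq α]

def RTree.leaves : RTree α → Finset α
  | .leaf x => {x}
  | .node l r => l.leaves ∪ r.leaves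

def RTree.distinctLabels : RTree α → Prop
  | .leaf _ => True
  | .node l r => l.distinctLabels ∧ r.distinctLabels ∧ Disjoint l.leaves r.leaves

def RTree.clades : RTree α → Finset (Finset α)
  | .leaf x => {{x}}
  | .node l r => l.clades ∪ r.clades ∪ {l.leaves ∪ r.leaves}

/-- `T` displays the rooted triple `((a,b),c)` if some clade of `T` contains `a` and `b`
but not `c`. -/
def RTree.displaysTriple (T : RTree α) (a b c : α) : Prop :=
  ∃ D ∈ T.clades, a ∈ D ∧ b ∈ D ∧ c ∉ D

lemma RTree.clade_subset_leaves : ∀ (T : RTree α) (D : Finset α), D ∈ T.clades → D ⊆ T.leaves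
  | .leaf x, D, h => by
      simp only [RTree.clades, Finset.mem_union, Finset.mem_singleton] at h; simp [h, RTree.leaves]
  | .node l r, D, h => by
      simp only [RTree.clades, Finset.mem_union, Finset.mem_singleton] at h
      rcases h with (h | h) | h
      · exact (l.clade_subset_leaves D h).trans (by simp [RTree.leaves])
      · exact (r.clade_subset_leaves D h).trans (by simp [RTree.leaves])
      · simp [h, RTree.leaves]

lemma RTree.leaves_nonempty : ∀ (T : RTree α), T.leaves.Nonempty
  | .leaf x => by simp [RTree.leaves]
  | .node l r => by
      simpa only [RTree.leaves] using l.leaves_nonempty.mono Finset.subset_union_left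

lemma RTree.triples_imp_clade : ∀ (T : RTree α), T.distinctLabels →
    ∀ (C : Finset α), C ⊆ T.leaves → C.Nonempty →
    (∀ a ∈ C, ∀ b ∈ C, a ≠ b → ∀ c ∈ T.leaves, c ∉ C → T.displaysTriple a b c) →
    C ∈ T.clades
  | .leaf x, _, C, hC, hne, _ => by
      have : C = {x} := Finset.Nonempty.subset_singleton_iff hne |>.mp (by simpa [RTree.leaves] using hC)
      simp [this, RTree.clades]
  | .node l r, hD, C, hC, hne, htrip => by
      obtain ⟨hDl, hDr, hdisj⟩ := hD
      by_cases hCl : C ⊆ l.leaves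
      · -- push down to left subtree
        have : C ∈ l.clades := by
          apply l.triples_imp_clade hDl C hCl hne
          intro a ha b hb hab c hc hcC
          have hcT : c ∈ (RTree.node l r).leaves := by simp [RTree.leaves, hc]
          obtain ⟨D, hDm, haD, hbD, hcD⟩ := htrip a ha b hb hab c hcT hcC
          simp only [RTree.clades, Finset.mem_union, Finset.mem_singleton] at hDm
          rcases hDm with (h | h) | h
          · exact ⟨D, h, haD, hbD, hcD⟩
          · exact absurd (hdisj.forall_ne_finset (hCl ha) (r.clade_subset_leaves D h haD)) (by simp)
          · exact absurd (by simp [h, hc] : c ∈ D) hcD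
        simp [RTree.clades]; tauto
      · by_cases hCr : C ⊆ r.leaves
        · have : C ∈ r.clades := by
            apply r.triples_imp_clade hDr C hCr hne
            intro a ha b hb hab c hc hcC
            have hcT : c ∈ (RTree.node l r).leaves := by simp [RTree.leaves, hc]
            obtain ⟨D, hDm, haD, hbD, hcD⟩ := htrip a ha b hb hab c hcT hcC
            simp only [RTree.clades, Finset.mem_union, Finset.mem_singleton] at hDm
            rcases hDm with (h | h) | h
            · exact absurd (hdisj.forall_ne_finset (l.clade_subset_leaves D h haD) (hCr ha)) (by simp)
            · exact ⟨D, h, haD, hbD, hcD⟩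
            · exact absurd (by simp [h, hc] : c ∈ D) hcD
          simp [RTree.clades]; tauto
        · -- C meets both sides; claim C = leaves
          obtain ⟨a, haC, haL⟩ : ∃ a ∈ C, a ∉ r.leaves := by
            by_contra h; push_neg at h; exact hCr h
          obtain ⟨b, hbC, hbR⟩ : ∃ b ∈ C, b ∉ l.leaves := by
            by_contra h; push_neg at h; exact hCl h
          have haL' : a ∈ l.leaves := by
            have := hC haC; simp [RTree.leaves] at this; tauto
          have hbR' : b ∈ r.leaves := by
            have := hC hbC; simp [RTree.leaves] at this; tauto
          have hab : a ≠ b := fun h => haL (h ▸ hbR')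
          have hCeq : C = (RTree.node l r).leaves := by
            apply Finset.Subset.antisymm hC
            intro c hc
            by_contra hcC
            obtain ⟨D, hDm, haD, hbD, hcD⟩ := htrip a haC b hbC hab c hc hcC
            simp only [RTree.clades, Finset.mem_union, Finset.mem_singleton] at hDm
            rcases hDm with (h | h) | h
            · exact hbR (l.clade_subset_leaves D h hbD)
            · exact haL (r.clade_subset_leaves D h haD)
            · exact hcD (by simpa [h, RTree.leaves] using hc)
          rw [hCeq]
          simp [RTree.clades, RTree.leaves]

/-- Under the multispecies coalescent on a binary species tree `σ = (ψ, ℓ)` whose internal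
edge lengths all exceed `ε ≥ 0` — so that, for any rooted triple `((a,b),c)` not displayed
on `ψ`, the gene-tree triple probability is `< (1/3)exp(-ε)`, and the gene-tree triple
probability always dominates the clade probability of any set containing `a, b` but not
`c` — any set `C` of taxa whose gene-lineage clade probability is `≥ (1/3)exp(-ε)` is a
clade of the species tree. -/
theorem high_prob_clade_is_species_clade
    (X : Finset α) (ψ : RTree α) (hL : ψ.leaves = X) (hD : ψ.distinctLabels)
    (ℓ : Finset α → ℝ) (ε : ℝ) (hε : 0 ≤ ε)
    (hlen : ∀ E ∈ ψ.clades, 2 ≤ E.card → E ≠ X → ε < ℓ E)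
    (tripleProb : α → α → α → ℝ) (cladeProb : Finset α → ℝ)
    (htriple : ∀ a ∈ X, ∀ b ∈ X, ∀ c ∈ X, a ≠ b → a ≠ c → b ≠ c →
      ¬ ψ.displaysTriple a b c → tripleProb a b c < (1/3) * Real.exp (-ε))
    (hdom : ∀ C : Finset α, ∀ a ∈ C, ∀ b ∈ C, a ≠ b → ∀ c ∉ C,
      cladeProb C ≤ tripleProb a b c)
    (C : Finset α) (hCX : C ⊆ X) (hCne : C.Nonempty)
    (hge : (1/3) * Real.exp (-ε) ≤ cladeProb C) :
    C ∈ ψ.clades := by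
  apply ψ.triples_imp_clade hD C (hL ▸ hCX) hCne
  intro a ha b hb hab c hc hcC
  by_contra hnd
  have hlt := htriple a (hCX ha) b (hCX hb) c (hL ▸ hc) hab
    (fun h => hcC (h ▸ ha)) (fun h => hcC (h ▸ hb)) hnd
  have := hdom C a ha b hb hab c hcC
  linarith
end

section
/- Under an exchangeable lineage model at a node v of a species tree, let the lineages entering v partition a clade A into blocks A_1,...,A_k with a ∈ A_1 and b ∈ A_2, and let C be a nonempty set of taxa disjoint from A. Then the map sending a subset S ⊆ A∖{a,b} with S∪{a} a union of A_1 and some other blocks (excluding A_2) to the subset S' with S'∪{b} equal to the union of A_2 and the same other blocks, is a bijection between the subsets contributing nonzero terms to Σ_{S⊆A'} P(S_g∪{A}∪C_g | π) and those contributing to Σ_{S⊆A'} P(S_g∪{B}∪C_g | π), with equal corresponding probabilities; hence these two conditional sums are equal. -/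
/-!
If `insert a S` is the union of a family `J` of blocks with `A₁ ∈ J` and `A₂ ∉ J`, then
`insert b (swapMap a b A₁ A₂ S)` is the union of `J` with `A₁` replaced by `A₂`, so exchangeability
makes the corresponding terms equal, and the same construction with `(a, A₁)` and `(b, A₂)`
interchanged inverts the map. By the support hypotheses the nonzero terms of both sums come from
such sets; `A₂ ∉ J` is automatic because `b ∉ insert a S`.
-/

variable {α : Type} [DecidableEq α]

/-- The swap map: given `S` with `S ∪ {a}` a union of blocks including `A₁ ∋ a`,
replace the block `A₁` by `A₂` and remove `b ∈ A₂`. -/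
def swapMap (a b : α) (A₁ A₂ : Finset α) (S : Finset α) : Finset α :=
  ((insert a S \ A₁) ∪ A₂).erase b

theorem Finset.sum_eq_sum_of_bijOn_of_support_subset {ι M : Type*} [AddCommMonoid M]
    {s t : Finset ι} {D D' : Set ι} {f g : ι → M} {e : ι → ι}
    (hfD : ∀ x ∈ s, f x ≠ 0 → x ∈ D) (hgD' : ∀ y ∈ t, g y ≠ 0 → y ∈ D')
    (hDs : D ⊆ s) (hD't : D' ⊆ t) (he : Set.BijOn e D D') (hfg : ∀ x ∈ D, f x = g (e x)) :
    ∑ x ∈ s, f x = ∑ y ∈ t, g y := by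
  refine Finset.sum_bij_ne_zero (fun x _ _ => e x)
    (fun x hx hfx => hD't (he.mapsTo (hfD x hx hfx)))
    (fun x₁ hx₁ hfx₁ x₂ hx₂ hfx₂ => he.injOn (hfD x₁ hx₁ hfx₁) (hfD x₂ hx₂ hfx₂)) ?_
    (fun x hx hfx => hfg x (hfD x hx hfx))
  intro y hy hgy
  obtain ⟨x, hxD, rfl⟩ := he.surjOn (hgD' y hy hgy)
  exact ⟨x, hDs hxD, by rwa [hfg x hxD], rfl⟩

theorem Finset.sup_id_sdiff_of_pairwiseDisjoint {J : Finset (Finset α)} {B : Finset α}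
    (hJ : (J : Set (Finset α)).PairwiseDisjoint id) (hB : B ∈ J) :
    J.sup id \ B = (J.erase B).sup id := by
  have hdisj : Disjoint B ((J.erase B).sup id) :=
    Finset.disjoint_sup_right.mpr fun C hC =>
      hJ hB (Finset.mem_of_mem_erase hC) (Finset.ne_of_mem_erase hC).symm
  conv_lhs => rw [← Finset.insert_erase hB]
  rw [Finset.sup_insert, id_eq, Finset.sup_eq_union, Finset.union_sdiff_cancel_left hdisj]

section

variable {blocks J : Finset (Finset α)} {A₁ A₂ S : Finset α} {a b : α}

theorem insert_swapMap_eq_sup (hJ : (J : Set (Finset α)).PairwiseDisjoint id) (hA₁J : A₁ ∈ J)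
    (hb : b ∈ A₂) (hSJ : insert a S = J.sup id) :
    insert b (swapMap a b A₁ A₂ S) = (insert A₂ (J.erase A₁)).sup id := by
  rw [swapMap, Finset.insert_erase (Finset.mem_union_right _ hb), hSJ,
    Finset.sup_id_sdiff_of_pairwiseDisjoint hJ hA₁J, Finset.sup_insert, id_eq,
    Finset.sup_eq_union, Finset.union_comm]

def IsBlockUnion (blocks : Finset (Finset α)) (A₁ A₂ : Finset α) (a : α) (S : Finset α) :
    Prop :=
  ∃ J ⊆ blocks.erase A₂, A₁ ∈ J ∧ insert a S = J.sup id

theorem isBlockUnion_of_notMem (hb : b ∈ A₂) (hbS : b ∉ insert a S)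
    (hS : ∃ J ⊆ blocks, A₁ ∈ J ∧ insert a S = J.sup id) : IsBlockUnion blocks A₁ A₂ a S := by
  obtain ⟨J, hJ, hA₁J, hSJ⟩ := hS
  have hA₂J : A₂ ∉ J := fun h => hbS (hSJ ▸ Finset.le_sup (f := id) h hb)
  exact ⟨J, Finset.subset_erase.mpr ⟨hJ, hA₂J⟩, hA₁J, hSJ⟩

variable (hdisj : (blocks : Set (Finset α)).PairwiseDisjoint id)
include hdisj

theorem isBlockUnion_swapMap (hA₂ : A₂ ∈ blocks) (hA₁₂ : A₁ ≠ A₂) (hb : b ∈ A₂)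
    (hS : IsBlockUnion blocks A₁ A₂ a S) :
    IsBlockUnion blocks A₂ A₁ b (swapMap a b A₁ A₂ S) := by
  obtain ⟨J, hJ, hA₁J, hSJ⟩ := hS
  have hJblocks : J ⊆ blocks := hJ.trans (Finset.erase_subset _ _)
  refine ⟨insert A₂ (J.erase A₁), ?_, Finset.mem_insert_self _ _,
    insert_swapMap_eq_sup (hdisj.subset hJblocks) hA₁J hb hSJ⟩
  exact Finset.insert_subset (Finset.mem_erase.mpr ⟨hA₁₂.symm, hA₂⟩)
    (Finset.erase_subset_erase _ hJblocks)

theorem swapMap_subset_sdiff (hA₂ : A₂ ∈ blocks) (hA₁₂ : A₁ ≠ A₂) (ha : a ∈ A₁)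
    (hS : IsBlockUnion blocks A₁ A₂ a S) :
    swapMap a b A₁ A₂ S ⊆ blocks.sup id \ {a, b} := by
  obtain ⟨J, hJ, hA₁J, hSJ⟩ := hS
  have hJblocks : J ⊆ blocks := hJ.trans (Finset.erase_subset _ _)
  have haA₂ : a ∉ A₂ := Finset.disjoint_left.mp (hdisj (hJblocks hA₁J) hA₂ hA₁₂) ha
  intro x hx
  obtain ⟨hxb, hx⟩ := Finset.mem_erase.mp hx
  rw [Finset.mem_sdiff, Finset.mem_insert, Finset.mem_singleton, not_or]
  rcases Finset.mem_union.mp hx with hxS | hxA₂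
  · obtain ⟨hxS, hxA₁⟩ := Finset.mem_sdiff.mp hxS
    rw [hSJ] at hxS
    exact ⟨Finset.sup_mono (f := id) hJblocks hxS, fun h => hxA₁ (h ▸ ha), hxb⟩
  · exact ⟨Finset.le_sup (f := id) hA₂ hxA₂, fun h => haA₂ (h ▸ hxA₂), hxb⟩

theorem swapMap_swapMap (hA₂ : A₂ ∈ blocks) (ha : a ∈ A₁) (hb : b ∈ A₂) (haS : a ∉ S)
    (hS : IsBlockUnion blocks A₁ A₂ a S) :
    swapMap b a A₂ A₁ (swapMap a b A₁ A₂ S) = S := by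
  obtain ⟨J, hJ, hA₁J, hSJ⟩ := hS
  have hJblocks : J ⊆ blocks := hJ.trans (Finset.erase_subset _ _)
  have hA₂J : A₂ ∉ J := fun h => Finset.notMem_erase A₂ blocks (hJ h)
  have hSwap := insert_swapMap_eq_sup (hdisj.subset hJblocks) hA₁J hb hSJ
  have hSwapBlocks : insert A₂ (J.erase A₁) ⊆ blocks :=
    Finset.insert_subset hA₂ ((Finset.erase_subset _ _).trans hJblocks)
  have hSwapSwap := insert_swapMap_eq_sup (hdisj.subset (Finset.coe_subset.mpr hSwapBlocks))
    (Finset.mem_insert_self _ _) ha hSwap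
  rw [Finset.erase_insert (fun h => hA₂J (Finset.mem_of_mem_erase h)),
    Finset.insert_erase hA₁J, ← hSJ] at hSwapSwap
  calc swapMap b a A₂ A₁ (swapMap a b A₁ A₂ S)
      = (insert a (swapMap b a A₂ A₁ (swapMap a b A₁ A₂ S))).erase a :=
        (Finset.erase_insert (Finset.notMem_erase _ _)).symm
    _ = S := by rw [hSwapSwap, Finset.erase_insert haS]

theorem apply_insert_swapMap {β : Type*} {F : Finset α → β}
    (hF : ∀ J ⊆ blocks, A₁ ∈ J → A₂ ∉ J → F (J.sup id) = F ((insert A₂ (J.erase A₁)).sup id))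
    (hb : b ∈ A₂) (hS : IsBlockUnion blocks A₁ A₂ a S) :
    F (insert a S) = F (insert b (swapMap a b A₁ A₂ S)) := by
  obtain ⟨J, hJ, hA₁J, hSJ⟩ := hS
  have hJblocks : J ⊆ blocks := hJ.trans (Finset.erase_subset _ _)
  rw [hSJ, insert_swapMap_eq_sup (hdisj.subset hJblocks) hA₁J hb hSJ]
  exact hF J hJblocks hA₁J fun h => Finset.notMem_erase A₂ blocks (hJ h)

theorem bijOn_swapMap (hA₁ : A₁ ∈ blocks) (hA₂ : A₂ ∈ blocks) (hA₁₂ : A₁ ≠ A₂) (ha : a ∈ A₁)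
    (hb : b ∈ A₂) :
    Set.BijOn (swapMap a b A₁ A₂)
      {S | S ⊆ blocks.sup id \ {a, b} ∧ IsBlockUnion blocks A₁ A₂ a S}
      {S | S ⊆ blocks.sup id \ {a, b} ∧ IsBlockUnion blocks A₂ A₁ b S} := by
  have notMem {x : α} {T : Finset α} (hx : x ∈ ({a, b} : Finset α))
      (hT : T ⊆ blocks.sup id \ {a, b}) : x ∉ T :=
    Finset.disjoint_right.mp (Finset.subset_sdiff.mp hT).2 hx
  refine Set.InvOn.bijOn (f' := swapMap b a A₂ A₁) ⟨?_, ?_⟩ ?_ ?_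
  · rintro S ⟨hS, hSU⟩
    exact swapMap_swapMap hdisj hA₂ ha hb (notMem (by simp) hS) hSU
  · rintro T ⟨hT, hTU⟩
    exact swapMap_swapMap hdisj hA₁ hb ha (notMem (by simp) hT) hTU
  · rintro S ⟨-, hSU⟩
    exact ⟨swapMap_subset_sdiff hdisj hA₂ hA₁₂ ha hSU, isBlockUnion_swapMap hdisj hA₂ hA₁₂ hb hSU⟩
  · rintro T ⟨-, hTU⟩
    exact ⟨Finset.pair_comm b a ▸ swapMap_subset_sdiff hdisj hA₁ hA₁₂.symm hb hTU,
      isBlockUnion_swapMap hdisj hA₁ hA₁₂.symm ha hTU⟩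

end

theorem conditional_clade_sums_eq_general
    (A : Finset α)
    (a b : α) (hab : a ≠ b)
    (blocks : Finset (Finset α))
    (hdisj : ∀ B₁ ∈ blocks, ∀ B₂ ∈ blocks, B₁ ≠ B₂ → Disjoint B₁ B₂)
    (hcover : blocks.sup id = A)
    (A₁ A₂ : Finset α) (hA₁ : A₁ ∈ blocks) (hA₂ : A₂ ∈ blocks) (hA₁₂ : A₁ ≠ A₂)
    (haA₁ : a ∈ A₁) (hbA₂ : b ∈ A₂)
    (C : Finset α)
    (q : Finset α → ℝ)
    (hsupp_a : ∀ S ⊆ A \ {a, b}, q (insert a S ∪ C) ≠ 0 →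
      ∃ J ⊆ blocks, A₁ ∈ J ∧ insert a S = J.sup id)
    (hsupp_b : ∀ S ⊆ A \ {a, b}, q (insert b S ∪ C) ≠ 0 →
      ∃ J ⊆ blocks, A₂ ∈ J ∧ insert b S = J.sup id)
    (hexch : ∀ J ⊆ blocks, A₁ ∈ J → A₂ ∉ J →
      q (J.sup id ∪ C) = q ((insert A₂ (J.erase A₁)).sup id ∪ C)) :
    (∀ S ⊆ A \ {a, b},
        (∃ J ⊆ blocks.erase A₂, A₁ ∈ J ∧ insert a S = J.sup id) →
        q (insert a S ∪ C) = q (insert b (swapMap a b A₁ A₂ S) ∪ C)) ∧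
    Set.BijOn (swapMap a b A₁ A₂)
      {S : Finset α | S ⊆ A \ {a, b} ∧
        ∃ J ⊆ blocks.erase A₂, A₁ ∈ J ∧ insert a S = J.sup id}
      {S' : Finset α | S' ⊆ A \ {a, b} ∧
        ∃ J ⊆ blocks.erase A₁, A₂ ∈ J ∧ insert b S' = J.sup id} ∧
    ∑ S ∈ (A \ {a, b}).powerset, q (insert a S ∪ C)
      = ∑ S ∈ (A \ {a, b}).powerset, q (insert b S ∪ C) := by
  subst hcover
  have notMem {x y : α} {S : Finset α} (hxy : x ≠ y) (hy : y ∈ ({a, b} : Finset α))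
      (hS : S ⊆ blocks.sup id \ {a, b}) : y ∉ insert x S := by
    rw [Finset.mem_insert, not_or]
    exact ⟨hxy.symm, fun h => (Finset.mem_sdiff.mp (hS h)).2 hy⟩
  have hq_swap (S : Finset α) (hS : IsBlockUnion blocks A₁ A₂ a S) :
      q (insert a S ∪ C) = q (insert b (swapMap a b A₁ A₂ S) ∪ C) :=
    apply_insert_swapMap hdisj (F := fun D => q (D ∪ C)) hexch hbA₂ hS
  refine ⟨fun S _ hS => hq_swap S hS, bijOn_swapMap hdisj hA₁ hA₂ hA₁₂ haA₁ hbA₂, ?_⟩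
  refine Finset.sum_eq_sum_of_bijOn_of_support_subset (fun S hS hq => ?_) (fun S hS hq => ?_)
    (fun S hS => Finset.mem_powerset.mpr hS.1) (fun S hS => Finset.mem_powerset.mpr hS.1)
    (bijOn_swapMap hdisj hA₁ hA₂ hA₁₂ haA₁ hbA₂) fun S hS => hq_swap S hS.2
  · have hS := Finset.mem_powerset.mp hS
    exact ⟨hS, isBlockUnion_of_notMem hbA₂ (notMem hab (by simp) hS) (hsupp_a S hS hq)⟩
  · have hS := Finset.mem_powerset.mp hS
    exact ⟨hS, isBlockUnion_of_notMem haA₁ (notMem hab.symm (by simp) hS) (hsupp_b S hS hq)⟩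

/-- Under an exchangeable lineage model at the node `v = MRCA(A)` of a species tree,
condition on the partition of the clade `A` into blocks (the lineages entering `v`),
with `a ∈ A₁`, `b ∈ A₂` for distinct blocks.  Let `C` be a nonempty set of taxa disjoint
from `A`, and let `q D` denote the conditional probability that `D` is a gene tree clade
given the partition.  Hypotheses: (support) `q (S∪{a}∪C) ≠ 0` forces `S∪{a}` to be a
union of blocks containing `A₁` (and likewise for `b`, `A₂`); (exchangeability) replacing
the block `A₁` by `A₂` in such a union of blocks leaves `q` unchanged.  Then the swap map
is a bijection between the subsets `S ⊆ A∖{a,b}` contributing nonzero terms to the two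
sums, with equal corresponding conditional probabilities; hence
`Σ_{S⊆A'} q(S∪{a}∪C) = Σ_{S⊆A'} q(S∪{b}∪C)`. -/
theorem conditional_clade_sums_eq
    (A : Finset α) (hA : 2 ≤ A.card)
    (a b : α) (ha : a ∈ A) (hb : b ∈ A) (hab : a ≠ b)
    (blocks : Finset (Finset α))
    (hne : ∀ B ∈ blocks, B.Nonempty)
    (hdisj : ∀ B₁ ∈ blocks, ∀ B₂ ∈ blocks, B₁ ≠ B₂ → Disjoint B₁ B₂)
    (hcover : blocks.sup id = A)
    (A₁ A₂ : Finset α) (hA₁ : A₁ ∈ blocks) (hA₂ : A₂ ∈ blocks) (hA₁₂ : A₁ ≠ A₂)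
    (haA₁ : a ∈ A₁) (hbA₂ : b ∈ A₂)
    (C : Finset α) (hC : C.Nonempty) (hCA : Disjoint C A)
    (q : Finset α → ℝ)
    (hsupp_a : ∀ S ⊆ A \ {a, b}, q (insert a S ∪ C) ≠ 0 →
      ∃ J ⊆ blocks, A₁ ∈ J ∧ insert a S = J.sup id)
    (hsupp_b : ∀ S ⊆ A \ {a, b}, q (insert b S ∪ C) ≠ 0 →
      ∃ J ⊆ blocks, A₂ ∈ J ∧ insert b S = J.sup id)
    (hexch : ∀ J ⊆ blocks, A₁ ∈ J → A₂ ∉ J →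
      q (J.sup id ∪ C) = q ((insert A₂ (J.erase A₁)).sup id ∪ C)) :
    (∀ S ⊆ A \ {a, b},
        (∃ J ⊆ blocks.erase A₂, A₁ ∈ J ∧ insert a S = J.sup id) →
        q (insert a S ∪ C) = q (insert b (swapMap a b A₁ A₂ S) ∪ C)) ∧
    Set.BijOn (swapMap a b A₁ A₂)
      {S : Finset α | S ⊆ A \ {a, b} ∧
        ∃ J ⊆ blocks.erase A₂, A₁ ∈ J ∧ insert a S = J.sup id}
      {S' : Finset α | S' ⊆ A \ {a, b} ∧
        ∃ J ⊆ blocks.erase A₁, A₂ ∈ J ∧ insert b S' = J.sup id} ∧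
    ∑ S ∈ (A \ {a, b}).powerset, q (insert a S ∪ C)
      = ∑ S ∈ (A \ {a, b}).powerset, q (insert b S ∪ C) :=
  conditional_clade_sums_eq_general A a b hab blocks hdisj hcover A₁ A₂ hA₁ hA₂ hA₁₂ haA₁ hbA₂ C q
    hsupp_a hsupp_b hexch
end

section
/- Fix a finite set A with |A| ≥ 2, distinct a, b ∈ A, A' = A∖{a,b}, and a partition π of A into blocks A_1,...,A_k with a ∈ A_1, b ∈ A_2 and k ≥ 2. The map φ defined on subsets S ⊆ A' such that S ∪ {a} is a disjoint union of A_1 together with some blocks from {A_3,...,A_k}, given by φ(S) = (A_2 ∪ (S∪{a}∖A_1)) ∖ {b}, is a bijection onto the set of subsets S' ⊆ A' such that S' ∪ {b} is a disjoint union of A_2 together with some blocks from {A_3,...,A_k}. -/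
variable {α : Type} [DecidableEq α]

private lemma sup_sdiff_of_mem (blocks J : Finset (Finset α))
    (hdisj : ∀ B₁ ∈ blocks, ∀ B₂ ∈ blocks, B₁ ≠ B₂ → Disjoint B₁ B₂)
    (hJ : J ⊆ blocks) (B₀ : Finset α) (hB₀ : B₀ ∈ J) :
    J.sup id \ B₀ = (J.erase B₀).sup id := by
  ext x
  simp only [Finset.mem_sdiff, Finset.mem_sup, Finset.mem_erase, id]
  constructor
  · rintro ⟨⟨B, hB, hxB⟩, hxB₀⟩
    exact ⟨B, ⟨fun h => hxB₀ (h ▸ hxB), hB⟩, hxB⟩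
  · rintro ⟨B, ⟨hBne, hBJ⟩, hxB⟩
    refine ⟨⟨B, hBJ, hxB⟩, fun hxB₀ => ?_⟩
    exact (Finset.disjoint_left.mp (hdisj B (hJ hBJ) B₀ (hJ hB₀) hBne)) hxB hxB₀

private lemma key (A : Finset α) (a b : α) (hab : a ≠ b)
    (blocks : Finset (Finset α))
    (hdisj : ∀ B₁ ∈ blocks, ∀ B₂ ∈ blocks, B₁ ≠ B₂ → Disjoint B₁ B₂)
    (hcover : blocks.sup id = A)
    (A₁ A₂ : Finset α) (hA₁ : A₁ ∈ blocks) (hA₂ : A₂ ∈ blocks) (hA₁₂ : A₁ ≠ A₂)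
    (haA₁ : a ∈ A₁) (hbA₂ : b ∈ A₂)
    (S : Finset α) (hS : S ⊆ A \ {a, b})
    (J : Finset (Finset α)) (hJ : J ⊆ blocks.erase A₂) (hA₁J : A₁ ∈ J)
    (hsup : insert a S = J.sup id) :
    (swapMap a b A₁ A₂ S ⊆ A \ {a, b} ∧
      ∃ J' ⊆ blocks.erase A₁, A₂ ∈ J' ∧ insert b (swapMap a b A₁ A₂ S) = J'.sup id)
    ∧ swapMap b a A₂ A₁ (swapMap a b A₁ A₂ S) = S := by
  have haS : a ∉ S := fun h => by
    have := hS h; simp [Finset.mem_sdiff] at this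
  have hJblocks : J ⊆ blocks := hJ.trans (Finset.erase_subset _ _)
  set J' : Finset (Finset α) := insert A₂ (J.erase A₁) with hJ'def
  have hJ'sub : J' ⊆ blocks.erase A₁ := by
    intro B hB
    rcases Finset.mem_insert.mp hB with h | h
    · subst h; exact Finset.mem_erase.mpr ⟨hA₁₂.symm, hA₂⟩
    · rcases Finset.mem_erase.mp h with ⟨hne, hBJ⟩
      exact Finset.mem_erase.mpr ⟨hne, hJblocks hBJ⟩
  have hJ'blocks : J' ⊆ blocks := hJ'sub.trans (Finset.erase_subset _ _)
  have h1 : J.sup id \ A₁ = (J.erase A₁).sup id :=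
    sup_sdiff_of_mem blocks J hdisj hJblocks A₁ hA₁J
  have hT : swapMap a b A₁ A₂ S = (J'.sup id).erase b := by
    unfold swapMap
    rw [hsup, h1, hJ'def, Finset.sup_insert]
    simp [Finset.union_comm]
  have hbJ' : b ∈ J'.sup id :=
    Finset.mem_sup.mpr ⟨A₂, Finset.mem_insert_self _ _, hbA₂⟩
  have hins : insert b (swapMap a b A₁ A₂ S) = J'.sup id := by
    rw [hT, Finset.insert_erase hbJ']
  have haJ' : a ∉ J'.sup id := by
    intro h
    rcases Finset.mem_sup.mp h with ⟨B, hB, haB⟩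
    have hBe := hJ'sub hB
    rcases Finset.mem_erase.mp hBe with ⟨hne, hBb⟩
    exact Finset.disjoint_left.mp (hdisj B hBb A₁ hA₁ hne) haB haA₁
  have hsupA : J'.sup id ⊆ A := hcover ▸ Finset.sup_mono hJ'blocks
  have hmem : swapMap a b A₁ A₂ S ⊆ A \ {a, b} := by
    intro x hx
    rw [hT] at hx
    rcases Finset.mem_erase.mp hx with ⟨hxb, hxsup⟩
    refine Finset.mem_sdiff.mpr ⟨hsupA hxsup, ?_⟩
    simp only [Finset.mem_insert, Finset.mem_singleton]
    rintro (rfl | rfl)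
    · exact haJ' hxsup
    · exact hxb rfl
  refine ⟨⟨hmem, J', hJ'sub, Finset.mem_insert_self _ _, hins⟩, ?_⟩
  -- inverse computation
  have hA₂J : A₂ ∉ J := fun h => (Finset.mem_erase.mp (hJ h)).1 rfl
  have h2 : J'.sup id \ A₂ = (J'.erase A₂).sup id :=
    sup_sdiff_of_mem blocks J' hdisj hJ'blocks A₂ (Finset.mem_insert_self _ _)
  have h3 : J'.erase A₂ = J.erase A₁ := by
    rw [hJ'def, Finset.erase_insert]
    exact fun h => hA₂J (Finset.mem_of_mem_erase h)
  have h4 : (J.erase A₁).sup id ∪ A₁ = J.sup id := by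
    conv_rhs => rw [← Finset.insert_erase hA₁J]
    rw [Finset.sup_insert]
    simp [Finset.union_comm]
  show ((insert b (swapMap a b A₁ A₂ S) \ A₂) ∪ A₁).erase a = S
  rw [hins, h2, h3, h4, ← hsup, Finset.erase_insert haS]

/-- Fix a finite set `A` with `|A| ≥ 2`, distinct `a, b ∈ A`, `A' = A∖{a,b}`, and a
partition of `A` into blocks, with `a ∈ A₁`, `b ∈ A₂` for distinct blocks `A₁ ≠ A₂`.
The map `φ(S) = (A₂ ∪ ((S∪{a})∖A₁)) ∖ {b}` is a bijection from the subsets `S ⊆ A'`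
such that `S ∪ {a}` is a disjoint union of `A₁` together with some blocks other than
`A₁, A₂`, onto the subsets `S' ⊆ A'` such that `S' ∪ {b}` is a disjoint union of `A₂`
together with some blocks other than `A₁, A₂`. -/
theorem swapMap_bijOn
    (A : Finset α) (hA : 2 ≤ A.card)
    (a b : α) (ha : a ∈ A) (hb : b ∈ A) (hab : a ≠ b)
    (blocks : Finset (Finset α))
    (hne : ∀ B ∈ blocks, B.Nonempty)
    (hdisj : ∀ B₁ ∈ blocks, ∀ B₂ ∈ blocks, B₁ ≠ B₂ → Disjoint B₁ B₂)
    (hcover : blocks.sup id = A)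
    (A₁ A₂ : Finset α) (hA₁ : A₁ ∈ blocks) (hA₂ : A₂ ∈ blocks) (hA₁₂ : A₁ ≠ A₂)
    (haA₁ : a ∈ A₁) (hbA₂ : b ∈ A₂) :
    Set.BijOn (swapMap a b A₁ A₂)
      {S : Finset α | S ⊆ A \ {a, b} ∧
        ∃ J ⊆ blocks.erase A₂, A₁ ∈ J ∧ insert a S = J.sup id}
      {S' : Finset α | S' ⊆ A \ {a, b} ∧
        ∃ J ⊆ blocks.erase A₁, A₂ ∈ J ∧ insert b S' = J.sup id} := by
  have hpair : ({b, a} : Finset α) = {a, b} := Finset.pair_comm b a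
  refine Set.InvOn.bijOn (f' := swapMap b a A₂ A₁) ⟨?_, ?_⟩ ?_ ?_
  · intro S hS
    obtain ⟨hSsub, J, hJ, hA₁J, hsup⟩ := hS
    exact (key A a b hab blocks hdisj hcover A₁ A₂ hA₁ hA₂ hA₁₂ haA₁ hbA₂
      S hSsub J hJ hA₁J hsup).2
  · intro S hS
    obtain ⟨hSsub, J, hJ, hA₂J, hsup⟩ := hS
    exact (key A b a hab.symm blocks hdisj hcover A₂ A₁ hA₂ hA₁ hA₁₂.symm hbA₂ haA₁
      S (hpair ▸ hSsub) J hJ hA₂J hsup).2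
  · intro S hS
    obtain ⟨hSsub, J, hJ, hA₁J, hsup⟩ := hS
    exact (key A a b hab blocks hdisj hcover A₁ A₂ hA₁ hA₂ hA₁₂ haA₁ hbA₂
      S hSsub J hJ hA₁J hsup).1
  · intro S hS
    obtain ⟨hSsub, J, hJ, hA₂J, hsup⟩ := hS
    have := (key A b a hab.symm blocks hdisj hcover A₂ A₁ hA₂ hA₁ hA₁₂.symm hbA₂ haA₁
      S (hpair ▸ hSsub) J hJ hA₂J hsup).1
    rwa [hpair] at this
end

section
/- For a binary species tree σ on X and distinct a, b ∈ X, the set {a,b} is a clade of σ if and only if for every D ⊆ X∖{a,b}, P_σ({A}∪D_g) = P_σ({B}∪D_g). Hence 2-clades of the species tree are identifiable from clade probabilities for all positive edge lengths. -/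
variable {α : Type} [DecidableEq α]

/-! If `{a, b}` is not a clade, some clade `C` with at least two leaves contains exactly one
of them, say `x ∈ C` and `y ∉ C`: in the smallest subtree containing both, one of the two
children separates them, unless both children are single leaves and `{a, b}` is a clade after
all. The taxon-swap inequality for `C`, `x`, `y` then violates the swap invariance at
`D = C ∖ {x}`. -/

namespace RTree

theorem subset_leaves_of_mem_clades {t : RTree α} {C : Finset α} (h : C ∈ t.clades) :
    C ⊆ t.leaves := by
  induction t with
  | leaf x =>
    rw [clades, Finset.mem_singleton] at h
    exact h.le
  | node l r ihl ihr =>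
    simp only [clades, leaves, Finset.mem_union, Finset.mem_singleton] at h ⊢
    rcases h with (hl | hr) | rfl
    · exact (ihl hl).trans Finset.subset_union_left
    · exact (ihr hr).trans Finset.subset_union_right
    · exact le_rfl

theorem leaves_mem_clades (t : RTree α) : t.leaves ∈ t.clades := by
  cases t <;> simp [leaves, clades]

theorem clades_subset_node_left (l r : RTree α) : l.clades ⊆ (node l r).clades :=
  Finset.subset_union_left.trans Finset.subset_union_left

theorem clades_subset_node_right (l r : RTree α) : r.clades ⊆ (node l r).clades :=
  Finset.subset_union_right.trans Finset.subset_union_left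

theorem exists_separating_clade_node {l r : RTree α} {a b : α}
    (hal : a ∈ l.leaves) (hbl : b ∉ l.leaves) (hbr : b ∈ r.leaves) (har : a ∉ r.leaves)
    (hpair : {a, b} ∉ (node l r).clades) :
    ∃ C ∈ (node l r).clades, 2 ≤ C.card ∧ Xor (a ∈ C) (b ∈ C) := by
  rcases Finset.eq_singleton_or_nontrivial hal with hl | hl
  · rcases Finset.eq_singleton_or_nontrivial hbr with hr | hr
    · refine absurd ?_ hpair
      simp only [clades, Finset.mem_union, Finset.mem_singleton, hl, hr]
      exact Or.inr (Finset.insert_eq a {b})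
    · exact ⟨r.leaves, clades_subset_node_right l r r.leaves_mem_clades,
        Finset.one_lt_card_iff_nontrivial.2 hr, Or.inr ⟨hbr, har⟩⟩
  · exact ⟨l.leaves, clades_subset_node_left l r l.leaves_mem_clades,
      Finset.one_lt_card_iff_nontrivial.2 hl, Or.inl ⟨hal, hbl⟩⟩

theorem exists_separating_clade {t : RTree α} {a b : α} (hab : a ≠ b)
    (ha : a ∈ t.leaves) (hb : b ∈ t.leaves) (hpair : {a, b} ∉ t.clades) :
    ∃ C ∈ t.clades, 2 ≤ C.card ∧ Xor (a ∈ C) (b ∈ C) := by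
  induction t with
  | leaf x =>
    rw [leaves, Finset.mem_singleton] at ha hb
    exact absurd (ha.trans hb.symm) hab
  | node l r ihl ihr =>
    by_cases hl : a ∈ l.leaves ∧ b ∈ l.leaves
    · obtain ⟨C, hC, hsep⟩ := ihl hl.1 hl.2 fun h => hpair (clades_subset_node_left l r h)
      exact ⟨C, clades_subset_node_left l r hC, hsep⟩
    by_cases hr : a ∈ r.leaves ∧ b ∈ r.leaves
    · obtain ⟨C, hC, hsep⟩ := ihr hr.1 hr.2 fun h => hpair (clades_subset_node_right l r h)
      exact ⟨C, clades_subset_node_right l r hC, hsep⟩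
    rw [leaves, Finset.mem_union] at ha hb
    rcases ha with hal | har
    · have hbr : b ∈ r.leaves := hb.resolve_left fun hbl => hl ⟨hal, hbl⟩
      exact exists_separating_clade_node hal (fun hbl => hl ⟨hal, hbl⟩) hbr
        (fun har => hr ⟨har, hbr⟩) hpair
    · have hbl : b ∈ l.leaves := hb.resolve_right fun hbr => hr ⟨har, hbr⟩
      rw [Finset.pair_comm] at hpair
      obtain ⟨C, hC, hC2, hsep⟩ := exists_separating_clade_node hbl
        (fun hal => hl ⟨hal, hbl⟩) har (fun hbr => hr ⟨har, hbr⟩) hpair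
      exact ⟨C, hC, hC2, xor_comm _ _ ▸ hsep⟩

end RTree

theorem Finset.exists_subset_sdiff_pair_lt {X C : Finset α} {P : Finset α → ℝ} {x y : α}
    (hCX : C ⊆ X) (hx : x ∈ C) (hyC : y ∉ C) (hlt : P (insert y (C.erase x)) < P C) :
    ∃ D ⊆ X \ {x, y}, P (insert y D) < P (insert x D) := by
  refine ⟨C.erase x, fun z hz => ?_, by rwa [Finset.insert_erase hx]⟩
  obtain ⟨hzx, hzC⟩ := Finset.mem_erase.1 hz
  simp only [Finset.mem_sdiff, Finset.mem_insert, Finset.mem_singleton, not_or]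
  exact ⟨hCX hzC, hzx, fun hzy => hyC (hzy ▸ hzC)⟩

theorem two_clades_identifiable_general
    (X : Finset α) (ψ : RTree α) (hL : ψ.leaves = X)
    (P : Finset α → ℝ)
    (hcherry : ∀ x y : α, x ≠ y → ({x, y} : Finset α) ∈ ψ.clades →
      ∀ D ⊆ X \ {x, y}, P (insert x D) = P (insert y D))
    (hswap : ∀ Cl ∈ ψ.clades, 2 ≤ Cl.card → Cl ≠ X →
      ∀ x ∈ Cl, ∀ y ∈ X \ Cl, P (insert y (Cl.erase x)) < P Cl)
    (a b : α) (ha : a ∈ X) (hb : b ∈ X) (hab : a ≠ b) :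
    ({a, b} : Finset α) ∈ ψ.clades ↔
      ∀ D ⊆ X \ {a, b}, P (insert a D) = P (insert b D) := by
  refine ⟨hcherry a b hab, fun hinv => by_contra fun hpair => ?_⟩
  obtain ⟨C, hC, hC2, hsep⟩ := ψ.exists_separating_clade hab (hL ▸ ha) (hL ▸ hb) hpair
  have hCX : C ⊆ X := hL ▸ RTree.subset_leaves_of_mem_clades hC
  have violation : ∀ x y, x ∈ C → y ∈ X → y ∉ C →
      ∃ D ⊆ X \ {x, y}, P (insert y D) < P (insert x D) := fun x y hx hy hyC =>
    Finset.exists_subset_sdiff_pair_lt hCX hx hyC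
      (hswap C hC hC2 (fun hCX => hyC (hCX ▸ hy)) x hx y (Finset.mem_sdiff.2 ⟨hy, hyC⟩))
  rcases hsep with ⟨haC, hbC⟩ | ⟨hbC, haC⟩
  · obtain ⟨D, hD, hlt⟩ := violation a b haC hb hbC
    exact (hinv D hD).not_gt hlt
  · obtain ⟨D, hD, hlt⟩ := violation b a hbC ha haC
    rw [Finset.pair_comm] at hD
    exact (hinv D hD).not_lt hlt

/-- 2-clades of a binary species tree are identifiable from gene-tree clade
probabilities.  `P` denotes the clade probabilities under the multispecies coalescent on
the binary species tree `σ = (ψ, ℓ)` with strictly positive internal edge lengths; the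
model is abstracted by the two facts: (i) the cherry-swapping invariant, and (ii) the
taxon-swap lemma.  Then for distinct `a, b ∈ X`, `{a,b}` is a clade of `ψ` iff
`P({A}∪D_g) = P({B}∪D_g)` for every `D ⊆ X∖{a,b}`. -/
theorem two_clades_identifiable
    (X : Finset α) (ψ : RTree α) (hL : ψ.leaves = X) (hD : ψ.distinctLabels)
    (ℓ : Finset α → ℝ)
    (hlen : ∀ E ∈ ψ.clades, 2 ≤ E.card → E ≠ X → 0 < ℓ E)
    (P : Finset α → ℝ)
    (hcherry : ∀ x y : α, x ≠ y → ({x, y} : Finset α) ∈ ψ.clades →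
      ∀ D ⊆ X \ {x, y}, P (insert x D) = P (insert y D))
    (hswap : ∀ Cl ∈ ψ.clades, 2 ≤ Cl.card → Cl ≠ X →
      ∀ x ∈ Cl, ∀ y ∈ X \ Cl, P (insert y (Cl.erase x)) < P Cl)
    (a b : α) (ha : a ∈ X) (hb : b ∈ X) (hab : a ≠ b) :
    ({a, b} : Finset α) ∈ ψ.clades ↔
      ∀ D ⊆ X \ {a, b}, P (insert a D) = P (insert b D) :=
  two_clades_identifiable_general X ψ hL P hcherry hswap a b ha hb hab
end

section
/- For ideal point probabilities from the 5-taxon species tree σ = ((((a,b):x, c):y, d):z, e) with (x,y,z) branch lengths such that P_σ(ABC) < P_σ(CDE) (e.g., small x, y and large z), the greedy consensus procedure that accepts the most probable clades one at a time, subject to compatibility with previously accepted clades, returns a tree containing the clade {c,d,e}, which is not a clade of σ. In particular, greedy consensus applied to exact clade probabilities can return clades absent from the species tree. -/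
variable {α : Type} [DecidableEq α]

/-- Two sets are compatible if they are disjoint or nested. -/
def compat (C D : Finset α) : Prop := C ∩ D = ∅ ∨ C ⊆ D ∨ D ⊆ C

instance (C D : Finset α) : Decidable (compat C D) := by unfold compat; infer_instance

/-- Greedy consensus: process candidate clades in the given order, accepting each clade
that is compatible with all previously accepted clades. -/
def greedy : List (Finset α) → List (Finset α) → List (Finset α)
  | [], acc => acc
  | C :: rest, acc =>
      if acc.all (fun D => decide (compat C D)) then greedy rest (C :: acc)
      else greedy rest acc

/-! The three nontrivial clades of `τ` are pairwise compatible, and every other nontrivial clade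
on five taxa conflicts with one of them. Each of `{a,c}`, `{b,c}` and `{a,b,c}` conflicts with a
clade of `τ` of strictly higher probability (`{a,b}`, `{a,b}`, `{c,d,e}` respectively), and every
remaining candidate lies below `{a,b,c}`, hence below all three clades of `τ`. So each rejected
candidate conflicts with a clade of `τ` processed before it, and greedy keeps exactly the clades
of `τ`. The finite combinatorics is decided on `Fin 5` and transported along the injective
labelling `![a, b, c, d, e]`. -/

open Finset

def RTree.map {β γ : Type} (f : β → γ) : RTree β → RTree γ
  | .leaf x => .leaf (f x)
  | .node l r => .node (l.map f) (r.map f)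

section Image

variable {β : Type} [DecidableEq β] (f : α → β)

theorem RTree.leaves_map : ∀ t : RTree α, (t.map f).leaves = t.leaves.image f
  | .leaf _ => by simp [RTree.map, RTree.leaves]
  | .node l r => by simp [RTree.map, RTree.leaves, leaves_map l, leaves_map r, image_union]

theorem RTree.clades_map : ∀ t : RTree α, (t.map f).clades = t.clades.image (image f)
  | .leaf _ => by simp [RTree.map, RTree.clades]
  | .node l r => by
    simp [RTree.map, RTree.clades, clades_map l, clades_map r, leaves_map, image_union]

variable {f}

theorem compat_image_iff (hf : f.Injective) (C D : Finset α) :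
    compat (C.image f) (D.image f) ↔ compat C D := by
  simp only [compat, ← image_inter _ _ hf, image_eq_empty, image_subset_image_iff hf]

end Image

section Greedy

variable {β : Type} [Preorder β] (P : Finset α → β) {A : Finset (Finset α)}

theorem greedy_eq_reverse_filter_append (hA : ∀ C ∈ A, ∀ D ∈ A, compat C D) :
    ∀ L acc : List (Finset α), L.Pairwise (fun C D => P D ≤ P C) → (∀ D ∈ acc, D ∈ A) →
      (∀ C ∈ L, C ∉ A → ∃ D ∈ A, (D ∈ L ∨ D ∈ acc) ∧ P C < P D ∧ ¬compat C D) →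
      greedy L acc = (L.filter (· ∈ A)).reverse ++ acc
  | [], _, _, _, _ => rfl
  | C :: L, acc, hsorted, hacc, hrej => by
    obtain ⟨hC_top, hsorted⟩ := List.pairwise_cons.1 hsorted
    have hrej' : ∀ C' ∈ L, C' ∉ A →
        ∃ D ∈ A, (D = C ∨ D ∈ L ∨ D ∈ acc) ∧ P C' < P D ∧ ¬compat C' D := by
      intro C' hC' hC'A
      simpa only [List.mem_cons, or_assoc] using hrej C' (List.mem_cons_of_mem _ hC') hC'A
    by_cases hCA : C ∈ A
    · have hall : acc.all (fun D => decide (compat C D)) = true := by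
        simpa using fun D hD => hA C hCA D (hacc D hD)
      rw [greedy, if_pos hall, greedy_eq_reverse_filter_append hA L (C :: acc) hsorted]
      · simp [hCA]
      · simpa [hCA] using hacc
      · intro C' hC' hC'A
        obtain ⟨D, hDA, hD, hlt, hnc⟩ := hrej' C' hC' hC'A
        exact ⟨D, hDA, by simp only [List.mem_cons]; tauto, hlt, hnc⟩
    · obtain ⟨D, hDA, hD, hlt, hnc⟩ := hrej C List.mem_cons_self hCA
      have hDacc : D ∈ acc := by
        rcases hD with hD | hD
        · rcases List.mem_cons.1 hD with rfl | hD
          · exact absurd hDA hCA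
          · exact absurd (hC_top D hD) hlt.not_ge
        · exact hD
      have hnall : ¬acc.all (fun D => decide (compat C D)) = true := by
        simpa using ⟨D, hDacc, hnc⟩
      rw [greedy, if_neg hnall, greedy_eq_reverse_filter_append hA L acc hsorted hacc]
      · simp [hCA]
      · intro C' hC' hC'A
        obtain ⟨D, hDA, rfl | hD, hlt, hnc⟩ := hrej' C' hC' hC'A
        · exact absurd hDA hCA
        · exact ⟨D, hDA, hD, hlt, hnc⟩

theorem greedy_nil_eq_reverse_filter (hA : ∀ C ∈ A, ∀ D ∈ A, compat C D)
    {L : List (Finset α)} (hsorted : L.Pairwise (fun C D => P D ≤ P C))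
    (hrej : ∀ C ∈ L, C ∉ A → ∃ D ∈ A, D ∈ L ∧ P C < P D ∧ ¬compat C D) :
    greedy L [] = (L.filter (· ∈ A)).reverse := by
  simpa using greedy_eq_reverse_filter_append P hA L [] hsorted (by simp) (by simpa using hrej)

end Greedy

section FiveTaxa

def sigmaTree (a b c d e : α) : RTree α :=
  .node (.node (.node (.leaf a) (.leaf b)) (.leaf c)) (.node (.leaf d) (.leaf e))

def tauTree (a b c d e : α) : RTree α :=
  .node (.node (.leaf a) (.leaf b)) (.node (.leaf c) (.node (.leaf d) (.leaf e)))

def tauClades (a b c d e : α) : Finset (Finset α) := {{d, e}, {a, b}, {c, d, e}}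

variable {a b c d e : α}

theorem image_univ_five : univ.image ![a, b, c, d, e] = {a, b, c, d, e} := by
  ext
  simp [Fin.exists_fin_succ]
  tauto

theorem injective_of_card_eq_five (h : #{a, b, c, d, e} = 5) :
    (![a, b, c, d, e] : Fin 5 → α).Injective := by
  have hcard : #(univ.image ![a, b, c, d, e]) = #(univ : Finset (Fin 5)) := by
    rw [image_univ_five, h, card_fin]
  simpa using card_image_iff.1 hcard

theorem image_tauClades (a b c d e : α) :
    (tauClades 0 1 2 3 4).image (image ![a, b, c, d, e]) = tauClades a b c d e := by
  simp [tauClades]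

theorem compat_of_mem_tauClades (hg : (![a, b, c, d, e] : Fin 5 → α).Injective) :
    ∀ C ∈ tauClades a b c d e, ∀ D ∈ tauClades a b c d e, compat C D := by
  rw [← image_tauClades]
  simp only [forall_mem_image, compat_image_iff hg]
  decide

theorem nontrivial_of_mem_tauClades (hg : (![a, b, c, d, e] : Fin 5 → α).Injective)
    {D : Finset α} (hD : D ∈ tauClades a b c d e) :
    D ⊆ {a, b, c, d, e} ∧ 2 ≤ #D ∧ D ≠ {a, b, c, d, e} := by
  rw [← image_tauClades a b c d e, mem_image] at hD
  obtain ⟨S, hS, rfl⟩ := hD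
  rw [← image_univ_five, card_image_of_injective _ hg, Ne, image_inj hg]
  exact ⟨image_subset_image (subset_univ S), by revert S; decide⟩

theorem exists_not_compat_of_not_mem_tauClades
    (hg : (![a, b, c, d, e] : Fin 5 → α).Injective) {C : Finset α} (hC : C ⊆ {a, b, c, d, e})
    (hcard : 2 ≤ #C) (hne : C ≠ {a, b, c, d, e}) (hCA : C ∉ tauClades a b c d e) :
    ∃ D ∈ tauClades a b c d e, ¬compat C D := by
  rw [← image_univ_five] at hC hne
  obtain ⟨S, -, rfl⟩ := subset_image_iff.1 hC
  rw [card_image_of_injective _ hg] at hcard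
  rw [Ne, image_inj hg] at hne
  rw [← image_tauClades, (image_injective hg).mem_finset_image] at hCA
  have hmaximal : ∀ S : Finset (Fin 5), 2 ≤ #S → S ≠ univ → S ∉ tauClades 0 1 2 3 4 →
      ∃ D ∈ tauClades 0 1 2 3 4, ¬compat S D := by
    decide
  obtain ⟨D, hD, hnc⟩ := hmaximal S hcard hne hCA
  exact ⟨D.image _, image_tauClades a b c d e ▸ mem_image_of_mem _ hD,
    (compat_image_iff hg _ _).not.2 hnc⟩

theorem exists_heavier_not_compat {β : Type} [Preorder β] (P : Finset α → β)
    (h1 : P {a, b} < P {d, e}) (h2 : P {a, c} < P {a, b}) (h3 : P {a, c} = P {b, c})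
    (h4 : P {c, d, e} < P {b, c}) (h5 : P {a, b, c} < P {c, d, e})
    (hg : (![a, b, c, d, e] : Fin 5 → α).Injective) {C : Finset α} (hC : C ⊆ {a, b, c, d, e})
    (hcard : 2 ≤ #C) (hne : C ≠ {a, b, c, d, e}) (hCA : C ∉ tauClades a b c d e)
    (hlow : C ∉ ({{d, e}, {a, b}, {a, c}, {b, c}, {c, d, e}, {a, b, c}} : Finset (Finset α)) →
      P C < P {a, b, c}) :
    ∃ D ∈ tauClades a b c d e, P C < P D ∧ ¬compat C D := by
  have not_compat (S T : Finset (Fin 5)) (h : ¬compat S T) :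
      ¬compat (S.image ![a, b, c, d, e]) (T.image ![a, b, c, d, e]) :=
    (compat_image_iff hg S T).not.2 h
  by_cases hspecial : C = {a, c} ∨ C = {b, c} ∨ C = {a, b, c}
  · rcases hspecial with rfl | rfl | rfl
    · exact ⟨{a, b}, by simp [tauClades], h2, by simpa using not_compat {0, 2} {0, 1} (by decide)⟩
    · exact ⟨{a, b}, by simp [tauClades], h3 ▸ h2,
        by simpa using not_compat {1, 2} {0, 1} (by decide)⟩
    · exact ⟨{c, d, e}, by simp [tauClades], h5,
        by simpa using not_compat {0, 1, 2} {2, 3, 4} (by decide)⟩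
  · obtain ⟨D, hD, hnc⟩ := exists_not_compat_of_not_mem_tauClades hg hC hcard hne hCA
    have hlt : P C < P {a, b, c} := hlow (by simp_all [tauClades])
    refine ⟨D, hD, ?_, hnc⟩
    simp only [tauClades, mem_insert, mem_singleton] at hD
    rcases hD with rfl | rfl | rfl <;> order

theorem not_mem_clades_sigmaTree (hg : (![a, b, c, d, e] : Fin 5 → α).Injective) :
    {c, d, e} ∉ (sigmaTree a b c d e).clades := by
  have hcde : ({c, d, e} : Finset α) = ({2, 3, 4} : Finset (Fin 5)).image ![a, b, c, d, e] := by
    simp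
  rw [show sigmaTree a b c d e = (sigmaTree 0 1 2 3 4).map ![a, b, c, d, e] from rfl,
    RTree.clades_map, hcde, (image_injective hg).mem_finset_image]
  decide

theorem tauClades_subset_clades : tauClades a b c d e ⊆ (tauTree a b c d e).clades := by
  rw [← image_tauClades, show tauTree a b c d e = (tauTree 0 1 2 3 4).map ![a, b, c, d, e] from rfl,
    RTree.clades_map]
  exact image_subset_image (by decide)

end FiveTaxa

theorem greedy_consensus_misleading_general
    (a b c d e : α)
    (hdist : ({a, b, c, d, e} : Finset α).card = 5)
    (X : Finset α) (hX : X = {a, b, c, d, e})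
    (σ : RTree α)
    (hσ : σ = .node (.node (.node (.leaf a) (.leaf b)) (.leaf c))
                    (.node (.leaf d) (.leaf e)))
    (τ : RTree α)
    (hτ : τ = .node (.node (.leaf a) (.leaf b))
                    (.node (.leaf c) (.node (.leaf d) (.leaf e))))
    (P : Finset α → ℝ)
    (h1 : P {a, b} < P {d, e})
    (h2 : P {a, c} < P {a, b})
    (h3 : P {a, c} = P {b, c})
    (h4 : P {c, d, e} < P {b, c})
    (h5 : P {a, b, c} < P {c, d, e})
    (h6 : ∀ C ⊆ X, 2 ≤ C.card → C ≠ X →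
      C ∉ ({{d, e}, {a, b}, {a, c}, {b, c}, {c, d, e}, {a, b, c}} : Finset (Finset α)) →
      P C < P {a, b, c})
    (L : List (Finset α))
    (hmem : ∀ C : Finset α, C ∈ L ↔ (C ⊆ X ∧ 2 ≤ C.card ∧ C ≠ X))
    (hsorted : L.Pairwise (fun C D => P D ≤ P C)) :
    (greedy L []).toFinset = ({{d, e}, {a, b}, {c, d, e}} : Finset (Finset α)) ∧
    ({c, d, e} : Finset α) ∉ σ.clades ∧
    ∀ C ∈ greedy L [], C ∈ τ.clades := by
  subst hX hσ hτ
  have hg := injective_of_card_eq_five hdist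
  have hAL (D : Finset α) (hD : D ∈ tauClades a b c d e) : D ∈ L :=
    (hmem D).2 (nontrivial_of_mem_tauClades hg hD)
  have hgreedy := greedy_nil_eq_reverse_filter P (compat_of_mem_tauClades hg) hsorted
    fun C hC hCA => by
      obtain ⟨hCX, hcard, hne⟩ := (hmem C).1 hC
      obtain ⟨D, hD, hlt, hnc⟩ := exists_heavier_not_compat P h1 h2 h3 h4 h5 hg hCX hcard hne hCA
        (h6 C hCX hcard hne)
      exact ⟨D, hD, hAL D hD, hlt, hnc⟩
  refine ⟨?_, not_mem_clades_sigmaTree hg, fun C hC => ?_⟩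
  · show _ = tauClades a b c d e
    ext D
    simpa [hgreedy] using hAL D
  · rw [hgreedy, List.mem_reverse, List.mem_filter, decide_eq_true_eq] at hC
    exact tauClades_subset_clades hC.2

/-- Greedy consensus can be misleading.  Consider the 5-taxon species tree
`σ = (((a,b):x, c):y, (d,e):z)` and clade probabilities `P` with the ordering
`P(DE) > P(AB) > P(AC) = P(BC) > P(CDE) > P(ABC) >` all other nontrivial clade
probabilities (as occurs for `(x,y,z) = (0.05, 0.05, 2.0)`).  Running greedy consensus
through the nontrivial subsets of `X` in decreasing probability order accepts exactly
the clades `{d,e}, {a,b}, {c,d,e}`, yielding the tree `((a,b),(c,(d,e)))`; in particular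
the accepted clade `{c,d,e}` is not a clade of `σ`. -/
theorem greedy_consensus_misleading
    (a b c d e : α)
    (hdist : ({a, b, c, d, e} : Finset α).card = 5)
    (X : Finset α) (hX : X = {a, b, c, d, e})
    (σ : RTree α)
    (hσ : σ = .node (.node (.node (.leaf a) (.leaf b)) (.leaf c))
                    (.node (.leaf d) (.leaf e)))
    (τ : RTree α)
    (hτ : τ = .node (.node (.leaf a) (.leaf b))
                    (.node (.leaf c) (.node (.leaf d) (.leaf e))))
    (P : Finset α → ℝ)
    (h1 : P {a, b} < P {d, e})
    (h2 : P {a, c} < P {a, b})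
    (h3 : P {a, c} = P {b, c})
    (h4 : P {c, d, e} < P {b, c})
    (h5 : P {a, b, c} < P {c, d, e})
    (h6 : ∀ C ⊆ X, 2 ≤ C.card → C ≠ X →
      C ∉ ({{d, e}, {a, b}, {a, c}, {b, c}, {c, d, e}, {a, b, c}} : Finset (Finset α)) →
      P C < P {a, b, c})
    (L : List (Finset α)) (hnd : L.Nodup)
    (hmem : ∀ C : Finset α, C ∈ L ↔ (C ⊆ X ∧ 2 ≤ C.card ∧ C ≠ X))
    (hsorted : L.Pairwise (fun C D => P D ≤ P C)) :
    (greedy L []).toFinset = ({{d, e}, {a, b}, {c, d, e}} : Finset (Finset α)) ∧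
    ({c, d, e} : Finset α) ∉ σ.clades ∧
    ∀ C ∈ greedy L [], C ∈ τ.clades :=
  greedy_consensus_misleading_general a b c d e hdist X hX σ hσ τ hτ P h1 h2 h3 h4 h5 h6 L hmem
    hsorted
end
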